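/- arXiv:2202.00437 — 2 statements merged into one kernel-verified Lean document; each statement's English description precedes it below -/
import Mathlib

section
/- Let β=(β_n)_{n∈ℕ} be a Cantor base with x_β<+∞. If the quasi-lazy β-expansion of x_β−1 is finite of length n∈ℕ (i.e., ℓ*_β(x_β−1)=ℓ_0⋯ℓ_{n−1}0^ω with ℓ_{n−1}≠0 if n≥1), then x_{β^(n)}=1. -/
open Filter Topology

/-- A Cantor real base: a sequence of reals `> 1` whose infinite product diverges to `+∞`. -/
structure IsCantorBase (β : ℕ → ℝ) : Prop where
  one_lt : ∀ n, 1 < β n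
  prod_tendsto : Tendsto (fun N => ∏ i ∈ Finset.range N, β i) atTop atTop

/-- The product `β_0 ⋯ β_n`. -/
noncomputable def prodUpTo (β : ℕ → ℝ) (n : ℕ) : ℝ := ∏ i ∈ Finset.range (n + 1), β i

/-- The shifted base `β^(n) = (β_n, β_{n+1}, …)`. -/
def shiftBase (β : ℕ → ℝ) (n : ℕ) : ℕ → ℝ := fun m => β (n + m)

/-- `x_β = Σ_{n} (⌈β_n⌉ - 1)/(β_0 ⋯ β_n)`. -/
noncomputable def xB (β : ℕ → ℝ) : ℝ := ∑' n, ((⌈β n⌉ : ℝ) - 1) / prodUpTo β n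

/-- The condition `x_β < +∞`, i.e. the series defining `x_β` converges. -/
def XBSummable (β : ℕ → ℝ) : Prop :=
  Summable (fun n => ((⌈β n⌉ : ℝ) - 1) / prodUpTo β n)

/-- `val_β(a) = Σ_n a_n/(β_0 ⋯ β_n)`. -/
noncomputable def valB (β : ℕ → ℝ) (a : ℕ → ℤ) : ℝ := ∑' n, (a n : ℝ) / prodUpTo β n

/-- The digit condition `a_n ∈ [[0, ⌈β_n⌉ - 1]]` for all `n`. -/
def validWord (β : ℕ → ℝ) (a : ℕ → ℤ) : Prop := ∀ n, 0 ≤ a n ∧ a n ≤ ⌈β n⌉ - 1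

/-- The flip map `θ_β`. -/
noncomputable def theta (β : ℕ → ℝ) (a : ℕ → ℤ) : ℕ → ℤ := fun n => ⌈β n⌉ - 1 - a n

/-- The greedy remainders `r_{β,n}(x)`. -/
noncomputable def greedyR (β : ℕ → ℝ) (x : ℝ) : ℕ → ℝ
  | 0 => β 0 * x - (⌊β 0 * x⌋ : ℝ)
  | n + 1 => β (n + 1) * greedyR β x n - (⌊β (n + 1) * greedyR β x n⌋ : ℝ)

/-- The greedy digits `ε_{β,n}(x)`; `greedyDigit β x` is the greedy β-expansion `d_β(x)`. -/
noncomputable def greedyDigit (β : ℕ → ℝ) (x : ℝ) : ℕ → ℤ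
  | 0 => ⌊β 0 * x⌋
  | n + 1 => ⌊β (n + 1) * greedyR β x n⌋

/-- The lazy remainders `s_{β,n}(x)`. -/
noncomputable def lazyS (β : ℕ → ℝ) (x : ℝ) : ℕ → ℝ
  | 0 => β 0 * x - (⌈β 0 * x - xB (shiftBase β 1)⌉ : ℝ)
  | n + 1 => β (n + 1) * lazyS β x n -
      (⌈β (n + 1) * lazyS β x n - xB (shiftBase β (n + 2))⌉ : ℝ)

/-- The lazy digits `ξ_{β,n}(x)`; `lazyDigit β x` is the lazy β-expansion `ℓ_β(x)`. -/
noncomputable def lazyDigit (β : ℕ → ℝ) (x : ℝ) : ℕ → ℤ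
  | 0 => ⌈β 0 * x - xB (shiftBase β 1)⌉
  | n + 1 => ⌈β (n + 1) * lazyS β x n - xB (shiftBase β (n + 2))⌉

/-- Strict lexicographic order on infinite words. -/
def lexLt (a b : ℕ → ℤ) : Prop := ∃ k, (∀ i < k, a i = b i) ∧ a k < b k

/-- Lexicographic order on infinite words. -/
def lexLe (a b : ℕ → ℤ) : Prop := lexLt a b ∨ a = b

/-- `D_β`, the set of greedy β-expansions of points of `[0,1)`. -/
def greedySet (β : ℕ → ℝ) : Set (ℕ → ℤ) :=
  {a | ∃ x ∈ Set.Ico (0 : ℝ) 1, a = greedyDigit β x}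

/-- `D'_β`, the set of lazy β-expansions of points of `(x_β - 1, x_β]`. -/
def lazySet (β : ℕ → ℝ) : Set (ℕ → ℤ) :=
  {a | ∃ x ∈ Set.Ioc (xB β - 1) (xB β), a = lazyDigit β x}

/-- `Δ'_β = ⋃_n D'_{β^(n)}`. -/
def deltaSet (β : ℕ → ℝ) : Set (ℕ → ℤ) := ⋃ n, lazySet (shiftBase β n)

/-!
Let `r_m` be the remainder of `x_β - 1` after reading the first `m` digits of the quasi-lazy
expansion. Each lazy remainder `s_{β,m}(x)` lies in `(x_{β^(m+1)} - 1, x_{β^(m+1)}]`, and passing to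
the limit `x → (x_β - 1)⁺` puts `r_m` in `[x_{β^(m)} - 1, x_{β^(m)}]`. Once the digits vanish, the
remainders only get multiplied by the bases: `r_n β_n ⋯ β_{n+j-1} = r_{n+j} ≤ x_{β^(n+j)}`. But
`x_{β^(n+j)} / (β_n ⋯ β_{n+j-1})` is the tail of the series defining `x_{β^(n)}`, so it tends to `0`,
whence `x_{β^(n)} - 1 ≤ r_n ≤ 0`. Conversely `x_γ ≥ 1` for every Cantor base `γ`, because
`⌈γ_k⌉ - 1 ≥ γ_k - 1` and `Σ_k (γ_k - 1)/(γ_0 ⋯ γ_k)` telescopes to `1`.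
-/

open Finset

section CantorBase

variable {β : ℕ → ℝ}

lemma IsCantorBase.pos (hβ : IsCantorBase β) (k : ℕ) : 0 < β k :=
  one_pos.trans (hβ.one_lt k)

lemma shiftBase_zero (β : ℕ → ℝ) : shiftBase β 0 = β := by
  funext m
  simp [shiftBase]

lemma shiftBase_shiftBase (β : ℕ → ℝ) (m n : ℕ) :
    shiftBase (shiftBase β m) n = shiftBase β (m + n) := by
  funext k
  simp [shiftBase, add_assoc]

lemma prodUpTo_add (β : ℕ → ℝ) (n k : ℕ) :
    prodUpTo β (n + k) = (∏ i ∈ range n, β i) * prodUpTo (shiftBase β n) k := by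
  rw [prodUpTo, prodUpTo, add_assoc, prod_range_add]
  rfl

lemma IsCantorBase.shift (hβ : IsCantorBase β) (n : ℕ) : IsCantorBase (shiftBase β n) where
  one_lt k := hβ.one_lt (n + k)
  prod_tendsto := by
    have hP : 0 < ∏ i ∈ range n, β i := prod_pos fun i _ => hβ.pos i
    refine ((hβ.prod_tendsto.comp (tendsto_add_atTop_nat n)).atTop_div_const hP).congr fun j => ?_
    rw [Function.comp_apply, add_comm, prod_range_add, mul_div_cancel_left₀ _ hP.ne']
    rfl

lemma XBSummable.shift (hβ : ∀ k, β k ≠ 0) (hx : XBSummable β) (n : ℕ) :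
    XBSummable (shiftBase β n) := by
  have hP : ∏ i ∈ range n, β i ≠ 0 := prod_ne_zero_iff.2 fun i _ => hβ i
  refine (((summable_nat_add_iff n).2 hx).mul_left (∏ i ∈ range n, β i)).congr fun k => ?_
  rw [add_comm k n, prodUpTo_add, mul_div_assoc', mul_div_mul_left _ _ hP]
  rfl

lemma xB_eq_sum_add_xB_shiftBase (hx : XBSummable β) (j : ℕ) :
    xB β = ∑ k ∈ range j, ((⌈β k⌉ : ℝ) - 1) / prodUpTo β k
      + (∏ i ∈ range j, β i)⁻¹ * xB (shiftBase β j) := by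
  rw [xB, ← Summable.sum_add_tsum_nat_add j hx, xB, ← tsum_mul_left]
  congr 1
  refine tsum_congr fun k => ?_
  rw [add_comm k j, prodUpTo_add]
  simp only [shiftBase]
  ring

lemma nonpos_of_mul_prod_le_xB_shiftBase (hβ : ∀ k, 0 < β k) (hx : XBSummable β) {t : ℝ}
    (ht : ∀ j, t * ∏ i ∈ range j, β i ≤ xB (shiftBase β j)) : t ≤ 0 := by
  have htail : Tendsto (fun j => (∏ i ∈ range j, β i)⁻¹ * xB (shiftBase β j)) atTop (𝓝 0) := by
    have hsum : HasSum (fun k => ((⌈β k⌉ : ℝ) - 1) / prodUpTo β k) (xB β) := Summable.hasSum hx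
    have h := (tendsto_const_nhds (x := xB β)).sub hsum.tendsto_sum_nat
    rw [sub_self] at h
    refine h.congr fun j => ?_
    rw [xB_eq_sum_add_xB_shiftBase hx j, add_sub_cancel_left]
  refine ge_of_tendsto' htail fun j => ?_
  rw [le_inv_mul_iff₀ (prod_pos fun i _ => hβ i), mul_comm]
  exact ht j

lemma IsCantorBase.one_le_xB (hβ : IsCantorBase β) (hx : XBSummable β) : 1 ≤ xB β := by
  set P : ℕ → ℝ := fun j => ∏ i ∈ range j, β i
  have hP : ∀ j, 0 < P j := fun j => prod_pos fun i _ => hβ.pos i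
  have hterm : ∀ k, (P k)⁻¹ - (P (k + 1))⁻¹ ≤ ((⌈β k⌉ : ℝ) - 1) / prodUpTo β k := by
    intro k
    have hprod : prodUpTo β k = P k * β k := prod_range_succ β k
    calc (P k)⁻¹ - (P (k + 1))⁻¹ = (β k - 1) / prodUpTo β k := by
          rw [hprod, show P (k + 1) = P k * β k from hprod]
          field_simp [(hP k).ne', (hβ.pos k).ne']
      _ ≤ ((⌈β k⌉ : ℝ) - 1) / prodUpTo β k := by
          gcongr
          · exact (hprod ▸ mul_pos (hP k) (hβ.pos k)).le
          · exact Int.le_ceil _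
  have hnonneg : ∀ k, 0 ≤ ((⌈β k⌉ : ℝ) - 1) / prodUpTo β k := fun k =>
    div_nonneg (by linarith [(hβ.one_lt k).trans_le (Int.le_ceil (β k))])
      (prod_pos fun i _ => hβ.pos i).le
  have hpartial : ∀ j, 1 - (P j)⁻¹ ≤ xB β := fun j =>
    calc 1 - (P j)⁻¹ = ∑ k ∈ range j, ((P k)⁻¹ - (P (k + 1))⁻¹) := by
          rw [sum_range_sub' (fun k => (P k)⁻¹)]
          simp [P]
      _ ≤ ∑ k ∈ range j, ((⌈β k⌉ : ℝ) - 1) / prodUpTo β k := sum_le_sum fun k _ => hterm k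
      _ ≤ xB β := Summable.sum_le_tsum _ (fun k _ => hnonneg k) hx
  have hlim : Tendsto (fun j => 1 - (P j)⁻¹) atTop (𝓝 1) := by
    simpa using (tendsto_inv_atTop_zero.comp hβ.prod_tendsto).const_sub 1
  exact le_of_tendsto' hlim hpartial

end CantorBase

/-- `remainder β a x m = β_0 ⋯ β_{m-1} x - Σ_{k<m} a_k β_{k+1} ⋯ β_{m-1}`; with this indexing
`remainder β (lazyDigit β x) x (m + 1)` is the lazy remainder `s_{β,m}(x)`. -/
noncomputable def remainder (β : ℕ → ℝ) (a : ℕ → ℤ) (x : ℝ) : ℕ → ℝ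
  | 0 => x
  | m + 1 => β m * remainder β a x m - a m

section Remainder

variable {β : ℕ → ℝ}

lemma continuous_remainder (β : ℕ → ℝ) (a : ℕ → ℤ) (m : ℕ) :
    Continuous fun x => remainder β a x m := by
  induction m with
  | zero => exact continuous_id
  | succ m ih => exact (continuous_const.mul ih).sub continuous_const

lemma remainder_congr {a b : ℕ → ℤ} {m : ℕ} (h : ∀ k < m, a k = b k) (x : ℝ) :
    remainder β a x m = remainder β b x m := by
  induction m with
  | zero => rfl
  | succ m ih =>
    rw [remainder, remainder, ih fun k hk => h k (hk.trans m.lt_succ_self), h m m.lt_succ_self]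

lemma remainder_add_of_eq_zero {a : ℕ → ℤ} {n : ℕ} (ha : ∀ k, n ≤ k → a k = 0) (x : ℝ) (j : ℕ) :
    remainder β a x (n + j) = remainder β a x n * ∏ i ∈ range j, β (n + i) := by
  induction j with
  | zero => simp
  | succ j ih =>
    rw [← add_assoc, remainder, ih, ha (n + j) (Nat.le_add_right n j), prod_range_succ]
    push_cast
    ring

lemma lazyS_eq_remainder (x : ℝ) (m : ℕ) :
    lazyS β x m = remainder β (lazyDigit β x) x (m + 1) := by
  induction m with
  | zero => rfl
  | succ m ih => rw [remainder, ← ih]; rfl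

lemma lazyS_mem_Ioc (x : ℝ) (m : ℕ) :
    lazyS β x m ∈ Set.Ioc (xB (shiftBase β (m + 1)) - 1) (xB (shiftBase β (m + 1))) := by
  cases m with
  | zero =>
    have h₁ := Int.le_ceil (β 0 * x - xB (shiftBase β 1))
    have h₂ := Int.ceil_lt_add_one (β 0 * x - xB (shiftBase β 1))
    constructor <;> simp only [lazyS] <;> linarith
  | succ m =>
    have h₁ := Int.le_ceil (β (m + 1) * lazyS β x m - xB (shiftBase β (m + 2)))
    have h₂ := Int.ceil_lt_add_one (β (m + 1) * lazyS β x m - xB (shiftBase β (m + 2)))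
    constructor <;> simp only [lazyS] <;> linarith

lemma remainder_mem_Icc_of_tendsto_lazyDigit {ℓ : ℕ → ℤ}
    (hl : Tendsto (lazyDigit β) (𝓝[>] (xB β - 1)) (𝓝 ℓ)) (m : ℕ) :
    remainder β ℓ (xB β - 1) m ∈ Set.Icc (xB (shiftBase β m) - 1) (xB (shiftBase β m)) := by
  cases m with
  | zero => simp [remainder, shiftBase_zero]
  | succ m =>
    have hdigits : ∀ᶠ x in 𝓝[>] (xB β - 1), ∀ k ∈ range (m + 1), lazyDigit β x k = ℓ k := by
      refine (eventually_all_finset _).2 fun k _ => ?_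
      have hk := tendsto_pi_nhds.1 hl k
      rwa [nhds_discrete, tendsto_pure] at hk
    have hlim : Tendsto (fun x => remainder β ℓ x (m + 1)) (𝓝[>] (xB β - 1))
        (𝓝 (remainder β ℓ (xB β - 1) (m + 1))) :=
      (continuous_remainder β ℓ (m + 1)).continuousWithinAt
    refine isClosed_Icc.mem_of_tendsto hlim (hdigits.mono fun x hx => ?_)
    rw [← remainder_congr (fun k hk => hx k (mem_range.2 hk)), ← lazyS_eq_remainder]
    exact Set.Ioc_subset_Icc_self (lazyS_mem_Ioc x m)

end Remainder

theorem quasiLazy_finite_general (β : ℕ → ℝ) (hβ : IsCantorBase β) (hx : XBSummable β)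
    (ℓstar : ℕ → ℤ)
    (hl : Tendsto (lazyDigit β) (nhdsWithin (xB β - 1) (Set.Ioi (xB β - 1))) (nhds ℓstar))
    (n : ℕ) (hzero : ∀ k, n ≤ k → ℓstar k = 0) :
    xB (shiftBase β n) = 1 := by
  have hxn : XBSummable (shiftBase β n) := hx.shift (fun k => (hβ.pos k).ne') n
  have hstart := remainder_mem_Icc_of_tendsto_lazyDigit hl n
  have hnonpos : remainder β ℓstar (xB β - 1) n ≤ 0 := by
    refine nonpos_of_mul_prod_le_xB_shiftBase (hβ.shift n).pos hxn fun j => ?_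
    change _ * ∏ i ∈ range j, β (n + i) ≤ _
    rw [shiftBase_shiftBase, ← remainder_add_of_eq_zero hzero]
    exact (remainder_mem_Icc_of_tendsto_lazyDigit hl (n + j)).2
  linarith [(hβ.shift n).one_le_xB hxn, hstart.1]

/-- if the quasi-lazy expansion of `x_β−1` is finite of length `n`,
then `x_{β^(n)} = 1`. -/
theorem quasiLazy_finite (β : ℕ → ℝ) (hβ : IsCantorBase β) (hx : XBSummable β)
    (ℓstar : ℕ → ℤ)
    (hl : Tendsto (lazyDigit β) (nhdsWithin (xB β - 1) (Set.Ioi (xB β - 1))) (nhds ℓstar))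
    (n : ℕ) (hzero : ∀ k, n ≤ k → ℓstar k = 0)
    (hlast : ∀ m, n = m + 1 → ℓstar m ≠ 0) :
    xB (shiftBase β n) = 1 :=
  quasiLazy_finite_general β hβ hx ℓstar hl n hzero
end

section
/- Let β=(β_n)_{n∈ℕ} be a Cantor base with x_β<+∞. The infinite word ℓ*_β(x_β−1) is not ultimately maximal, i.e., there is no N∈ℕ such that for all n≥N the n-th letter of ℓ*_β(x_β−1) equals ⌈β_n⌉−1. -/
open Filter Topology

/-
If the letters of `ℓ*_β(x_β − 1)` were maximal from index `N` on, then the partial values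
`S_K = Σ_{n ≤ K} ℓ*_n / (β_0 ⋯ β_n)` and `A_K = Σ_{n ≤ K} (⌈β_n⌉ − 1) / (β_0 ⋯ β_n)` would differ
by the constant `S_N − A_N` for `K ≥ N`. Points `x` slightly above `x_β − 1` have lazy expansions
starting with any prescribed prefix of `ℓ*`, and the lazy remainder bounds
`x_β − A_K − 1/(β_0 ⋯ β_K) < x − Σ_{n ≤ K} ξ_n(x)/(β_0 ⋯ β_n) ≤ x_β − A_K` then force
`S_N − A_N > −1` (at level `N`) and `S_N − A_N ≤ −1` (letting `K → ∞`).
-/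

noncomputable def partialVal (β : ℕ → ℝ) (a : ℕ → ℤ) (K : ℕ) : ℝ :=
  ∑ n ∈ Finset.range (K + 1), (a n : ℝ) / prodUpTo β n

noncomputable def maxWord (β : ℕ → ℝ) : ℕ → ℤ := fun n => ⌈β n⌉ - 1

lemma prodUpTo_pos {β : ℕ → ℝ} (hβ : ∀ n, 0 < β n) (n : ℕ) : 0 < prodUpTo β n :=
  Finset.prod_pos fun i _ => hβ i

lemma prodUpTo_succ (β : ℕ → ℝ) (n : ℕ) : prodUpTo β (n + 1) = prodUpTo β n * β (n + 1) :=
  Finset.prod_range_succ _ _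

lemma prodUpTo_add_s9 (β : ℕ → ℝ) (K m : ℕ) :
    prodUpTo β (K + 1 + m) = prodUpTo β K * prodUpTo (shiftBase β (K + 1)) m := by
  rw [prodUpTo, prodUpTo, prodUpTo, show K + 1 + m + 1 = (K + 1) + (m + 1) by omega,
    Finset.prod_range_add]
  rfl

lemma tendsto_prodUpTo_atTop {β : ℕ → ℝ} (hβ : IsCantorBase β) :
    Tendsto (prodUpTo β) atTop atTop :=
  hβ.prod_tendsto.comp (tendsto_add_atTop_nat 1)

lemma partialVal_succ (β : ℕ → ℝ) (a : ℕ → ℤ) (K : ℕ) :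
    partialVal β a (K + 1) = partialVal β a K + (a (K + 1) : ℝ) / prodUpTo β (K + 1) :=
  Finset.sum_range_succ _ _

lemma partialVal_congr (β : ℕ → ℝ) {a b : ℕ → ℤ} {K : ℕ} (h : ∀ n ≤ K, a n = b n) :
    partialVal β a K = partialVal β b K :=
  Finset.sum_congr rfl fun n hn => by rw [h n (Nat.lt_succ_iff.mp (Finset.mem_range.mp hn))]

lemma partialVal_sub_partialVal_of_le (β : ℕ → ℝ) {a b : ℕ → ℤ} {N K : ℕ}
    (hab : ∀ n, N ≤ n → a n = b n) (hK : N ≤ K) :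
    partialVal β a K - partialVal β b K = partialVal β a N - partialVal β b N := by
  induction K, hK using Nat.le_induction with
  | base => rfl
  | succ K hNK ih =>
    rw [partialVal_succ, partialVal_succ, hab (K + 1) (by omega), ← ih]
    ring

lemma lazyS_eq (β : ℕ → ℝ) (hβ : ∀ n, 0 < β n) (x : ℝ) (K : ℕ) :
    lazyS β x K = prodUpTo β K * (x - partialVal β (lazyDigit β x) K) := by
  induction K with
  | zero =>
    have : β 0 ≠ 0 := (hβ 0).ne'
    simp only [lazyS, partialVal, prodUpTo, zero_add, Finset.sum_range_one,
      Finset.prod_range_one, lazyDigit]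
    field_simp
  | succ K ih =>
    have hβK : β (K + 1) ≠ 0 := (hβ (K + 1)).ne'
    have hPK : prodUpTo β K ≠ 0 := (prodUpTo_pos hβ K).ne'
    rw [show lazyS β x (K + 1) = β (K + 1) * lazyS β x K - lazyDigit β x (K + 1) from rfl, ih,
      partialVal_succ, prodUpTo_succ]
    field_simp
    ring

lemma lazyS_le (β : ℕ → ℝ) (x : ℝ) (n : ℕ) : lazyS β x n ≤ xB (shiftBase β (n + 1)) := by
  cases n with
  | zero => simp only [lazyS]; linarith [Int.le_ceil (β 0 * x - xB (shiftBase β 1))]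
  | succ m =>
    simp only [lazyS]
    linarith [Int.le_ceil (β (m + 1) * lazyS β x m - xB (shiftBase β (m + 2)))]

lemma lt_lazyS (β : ℕ → ℝ) (x : ℝ) (n : ℕ) : xB (shiftBase β (n + 1)) - 1 < lazyS β x n := by
  cases n with
  | zero => simp only [lazyS]; linarith [Int.ceil_lt_add_one (β 0 * x - xB (shiftBase β 1))]
  | succ m =>
    simp only [lazyS]
    linarith [Int.ceil_lt_add_one (β (m + 1) * lazyS β x m - xB (shiftBase β (m + 2)))]

lemma xB_shiftBase_succ (β : ℕ → ℝ) (hβ : ∀ n, 0 < β n) (hx : XBSummable β) (K : ℕ) :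
    xB (shiftBase β (K + 1)) = prodUpTo β K * (xB β - partialVal β (maxWord β) K) := by
  have hPK : prodUpTo β K ≠ 0 := (prodUpTo_pos hβ K).ne'
  have hterm : ∀ m, ((⌈shiftBase β (K + 1) m⌉ : ℝ) - 1) / prodUpTo (shiftBase β (K + 1)) m
      = prodUpTo β K * (((⌈β (m + (K + 1))⌉ : ℝ) - 1) / prodUpTo β (m + (K + 1))) := by
    intro m
    rw [add_comm m, prodUpTo_add_s9]
    simp only [shiftBase]
    field_simp
  have hsplit := hx.sum_add_tsum_nat_add (K + 1)
  rw [xB, tsum_congr hterm, tsum_mul_left, xB, ← hsplit, partialVal]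
  simp only [maxWord, Int.cast_sub, Int.cast_one]
  ring

lemma sub_partialVal_lazyDigit_le {β : ℕ → ℝ} (hβ : ∀ n, 0 < β n) (hx : XBSummable β)
    (x : ℝ) (K : ℕ) :
    x - partialVal β (lazyDigit β x) K ≤ xB β - partialVal β (maxWord β) K := by
  have h := lazyS_le β x K
  rw [lazyS_eq β hβ, xB_shiftBase_succ β hβ hx] at h
  exact le_of_mul_le_mul_left h (prodUpTo_pos hβ K)

lemma lt_sub_partialVal_lazyDigit {β : ℕ → ℝ} (hβ : ∀ n, 0 < β n) (hx : XBSummable β)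
    (x : ℝ) (K : ℕ) :
    xB β - partialVal β (maxWord β) K - (prodUpTo β K)⁻¹ < x - partialVal β (lazyDigit β x) K := by
  have hPK := prodUpTo_pos hβ K
  have h := lt_lazyS β x K
  rw [lazyS_eq β hβ, xB_shiftBase_succ β hβ hx] at h
  rw [← mul_lt_mul_iff_right₀ hPK, mul_sub, mul_inv_cancel₀ hPK.ne']
  exact h

lemma eventually_prefix_eq_of_tendsto {α γ : Type*} [TopologicalSpace γ] [DiscreteTopology γ]
    {l : Filter α} {f : α → ℕ → γ} {w : ℕ → γ} (h : Tendsto f l (𝓝 w)) (K : ℕ) :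
    ∀ᶠ a in l, ∀ n ≤ K, f a n = w n := by
  have hcoord : ∀ n ∈ Set.Iic K, ∀ᶠ a in l, f a n = w n := fun n _ => by
    simpa only [nhds_discrete, tendsto_pure] using tendsto_pi_nhds.mp h n
  exact (Set.finite_Iic K).eventually_all.mpr hcoord

lemma exists_near_right_prefix_eq {f : ℝ → ℕ → ℤ} {w : ℕ → ℤ} {c : ℝ}
    (h : Tendsto f (𝓝[>] c) (𝓝 w)) (K : ℕ) {ε : ℝ} (hε : 0 < ε) :
    ∃ x ∈ Set.Ioo c (c + ε), ∀ n ≤ K, f x n = w n := by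
  have hIoo : ∀ᶠ x in 𝓝[>] c, x ∈ Set.Ioo c (c + ε) := Ioo_mem_nhdsGT (by linarith)
  exact (hIoo.and (eventually_prefix_eq_of_tendsto h K)).exists

/-- the quasi-lazy expansion `ℓ*_β(x_β−1)` is not ultimately maximal. -/
theorem quasiLazy_not_ultimately_maximal (β : ℕ → ℝ) (hβ : IsCantorBase β) (hx : XBSummable β)
    (ℓstar : ℕ → ℤ)
    (hl : Tendsto (lazyDigit β) (nhdsWithin (xB β - 1) (Set.Ioi (xB β - 1))) (nhds ℓstar)) :
    ¬ ∃ N : ℕ, ∀ n, N ≤ n → ℓstar n = ⌈β n⌉ - 1 := by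
  rintro ⟨N, hN⟩
  have hpos : ∀ n, 0 < β n := fun n => one_pos.trans (hβ.one_lt n)
  set d := partialVal β ℓstar N - partialVal β (maxWord β) N
  have hd_gt : -1 < d := by
    obtain ⟨x, hx_mem, hpre⟩ := exists_near_right_prefix_eq hl N one_pos
    have h := sub_partialVal_lazyDigit_le hpos hx x N
    rw [partialVal_congr β hpre] at h
    linarith [hx_mem.1]
  have hd_lt : ∀ K, N ≤ K → ∀ ε > 0, d < -1 + (prodUpTo β K)⁻¹ + ε := by
    intro K hK ε hε
    obtain ⟨x, hx_mem, hpre⟩ := exists_near_right_prefix_eq hl K hε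
    have h := lt_sub_partialVal_lazyDigit hpos hx x K
    rw [partialVal_congr β hpre] at h
    have htail := partialVal_sub_partialVal_of_le β (b := maxWord β) hN hK
    linarith [hx_mem.2]
  have hδ : 0 < (d + 1) / 2 := by linarith
  obtain ⟨K, hK_inv, hNK⟩ := ((tendsto_prodUpTo_atTop hβ).inv_tendsto_atTop.eventually
    (eventually_lt_nhds hδ)).and (eventually_ge_atTop N) |>.exists
  rw [Pi.inv_apply] at hK_inv
  linarith [hd_lt K hNK _ hδ]
end
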